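/- arXiv:0704.0994 — 3 statements merged into one kernel-verified Lean document; each statement's English description precedes it below -/
import Mathlib

section
/- In a medium, a token cannot be a one-to-one (injective) function on the set of states. -/
/-!
Reverses are unique, and a vacuous message pairs each position with a different position
holding a reverse token. Completing a stepwise effective message `w` from `P` by a concise
message back to `P` gives a return message, hence a vacuous one. For `w = τ` this shows that
no token of a medium is its own reverse (its partner would be `τ` inside the consistent
part). For an injective `τ` moving `P`, the message `w = τ τ` is stepwise effective, so the
two leading copies of `τ` are paired with two different positions of the concise part, both
holding the unique reverse of `τ`; but a concise message has no repeated token.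
-/

variable {S : Type*}

/-- Result of applying message `m` (a list of tokens) to state `P`. -/
def mApply (m : List (S → S)) (P : S) : S := m.foldl (fun s τ => τ s) P

/-- `τ'` is a reverse of `τ`. -/
def IsReverse (τ τ' : S → S) : Prop := ∀ P Q : S, P ≠ Q → (τ P = Q ↔ τ' Q = P)

/-- `(S, T)` is a token system. -/
def IsTokenSystem (T : Set (S → S)) : Prop :=
  Nontrivial S ∧ T.Nonempty ∧ ∀ τ ∈ T, τ ≠ id

/-- `m` is a message of the token system with token set `T`. -/
def IsMsg (T : Set (S → S)) (m : List (S → S)) : Prop := ∀ τ ∈ m, τ ∈ T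

/-- `m` is stepwise effective for `P`. -/
def StepwiseEff : List (S → S) → S → Prop
  | [], _ => True
  | τ :: rest, P => τ P ≠ P ∧ StepwiseEff rest (τ P)

/-- `m` is consistent: it contains no token together with a reverse of it. -/
def Consistent (m : List (S → S)) : Prop :=
  ∀ τ ∈ m, ∀ τ' ∈ m, ¬ IsReverse τ τ'

/-- `m` is concise for `P`. -/
def Concise (T : Set (S → S)) (m : List (S → S)) (P : S) : Prop :=
  IsMsg T m ∧ Consistent m ∧ StepwiseEff m P ∧ m.Nodup

/-- `m` is a return message for `P`. -/
def IsReturn (m : List (S → S)) (P : S) : Prop :=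
  StepwiseEff m P ∧ mApply m P = P

/-- `m` is vacuous: its indices partition into pairs of mutually reverse tokens. -/
def Vacuous (m : List (S → S)) : Prop :=
  ∃ σ : Equiv.Perm (Fin m.length),
    (∀ i, σ i ≠ i) ∧ (∀ i, σ (σ i) = i) ∧
    ∀ i, IsReverse (m.get i) (m.get (σ i))

/-- `(S, T)` is a medium: token system satisfying [Ma] and [Mb]. -/
def IsMedium (T : Set (S → S)) : Prop :=
  IsTokenSystem T ∧
  (∀ P Q : S, P ≠ Q → ∃ m, Concise T m P ∧ mApply m P = Q) ∧
  (∀ (m : List (S → S)) (P : S), IsMsg T m → IsReturn m P → Vacuous m)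

/-- Content of a message: its set of tokens. -/
def msgContent (m : List (S → S)) : Set (S → S) := {τ | τ ∈ m}

/-- Token content of a state `P`. -/
def SContent (T : Set (S → S)) (P : S) : Set (S → S) :=
  {τ | ∃ (V : S) (m : List (S → S)), Concise T m V ∧ mApply m V = P ∧ τ ∈ m}

/-- `mr` is the reverse message `τ̃ₙ…τ̃₁` of `m = τ₁…τₙ`. -/
def IsReverseOfMsg (m mr : List (S → S)) : Prop :=
  List.Forall₂ (fun τ τ' => IsReverse τ τ' ∧ IsReverse τ' τ) m mr.reverse

lemma mApply_append (l₁ l₂ : List (S → S)) (P : S) :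
    mApply (l₁ ++ l₂) P = mApply l₂ (mApply l₁ P) :=
  List.foldl_append

lemma stepwiseEff_append {l₁ l₂ : List (S → S)} {P : S} :
    StepwiseEff (l₁ ++ l₂) P ↔ StepwiseEff l₁ P ∧ StepwiseEff l₂ (mApply l₁ P) := by
  induction l₁ generalizing P with
  | nil => simp [StepwiseEff, mApply]
  | cons τ l ih => simp only [List.cons_append, StepwiseEff, ih, and_assoc]; rfl

lemma IsMsg.append {T : Set (S → S)} {l₁ l₂ : List (S → S)} (h₁ : IsMsg T l₁)
    (h₂ : IsMsg T l₂) : IsMsg T (l₁ ++ l₂) :=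
  fun τ hτ => (List.mem_append.mp hτ).elim (h₁ τ) (h₂ τ)

lemma concise_nil (T : Set (S → S)) (P : S) : Concise T [] P :=
  ⟨by simp [IsMsg], by simp [Consistent], trivial, List.nodup_nil⟩

lemma IsReverse.unique {τ a b : S → S} (ha : IsReverse τ a) (hb : IsReverse τ b) : a = b := by
  -- if `a` moves `Y` to `X`, then `τ X = Y`, so `b` moves `Y` to `X` as well
  have agree : ∀ {a b : S → S}, IsReverse τ a → IsReverse τ b → ∀ Y, a Y ≠ Y → b Y = a Y :=
    fun ha hb Y h => (hb _ _ h).mp ((ha _ _ h).mpr rfl)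
  funext Y
  by_cases ha' : a Y = Y
  · by_cases hb' : b Y = Y
    · rw [ha', hb']
    · exact agree hb ha Y hb'
  · exact (agree ha hb Y ha').symm

namespace Vacuous

variable {a b : S → S} {m : List (S → S)}

lemma exists_mem_isReverse_of_cons (h : Vacuous (a :: m)) : ∃ μ ∈ m, IsReverse a μ := by
  obtain ⟨σ, hfix, -, hrev⟩ := h
  obtain ⟨i, hi⟩ := Fin.exists_succ_eq.mpr (hfix 0)
  have := hrev 0
  rw [← hi] at this
  exact ⟨m.get i, List.get_mem m i, this⟩

lemma exists_isReverse_get_of_cons_cons (h : Vacuous (a :: b :: m)) (hab : ¬ IsReverse a b) :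
    ∃ i j : Fin m.length, i ≠ j ∧ IsReverse a (m.get i) ∧ IsReverse b (m.get j) := by
  obtain ⟨σ, hfix, hinv, hrev⟩ := h
  have hσ0 : σ 0 ≠ 1 := fun h0 => hab (by simpa [h0] using hrev 0)
  have hσ1 : σ 1 ≠ 0 := fun h1 => hσ0 (by rw [← h1, hinv])
  obtain ⟨i', hi'⟩ := Fin.exists_succ_eq.mpr (hfix 0)
  obtain ⟨j', hj'⟩ := Fin.exists_succ_eq.mpr hσ1
  obtain ⟨i, rfl⟩ := Fin.exists_succ_eq.mpr (fun h : i' = 0 => hσ0 (by rw [← hi', h]; rfl))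
  obtain ⟨j, rfl⟩ := Fin.exists_succ_eq.mpr (fun h : j' = 0 => hfix 1 (by rw [← hj', h]; rfl))
  refine ⟨i, j, fun hij => ?_, ?_, ?_⟩
  · exact zero_ne_one (σ.injective (by rw [← hi', ← hj', hij]))
  · simpa [← hi'] using hrev 0
  · simpa [← hj'] using hrev 1

end Vacuous

namespace IsMedium

variable {T : Set (S → S)}

lemma exists_apply_ne (hM : IsMedium T) {τ : S → S} (hτ : τ ∈ T) : ∃ P, τ P ≠ P :=
  Function.ne_iff.mp (hM.1.2.2 τ hτ)

lemma exists_concise (hM : IsMedium T) (P Q : S) : ∃ m, Concise T m P ∧ mApply m P = Q := by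
  by_cases hPQ : P = Q
  · exact ⟨[], concise_nil T P, hPQ⟩
  · exact hM.2.1 P Q hPQ

lemma exists_concise_vacuous_append (hM : IsMedium T) {w : List (S → S)} {P : S} (hw : IsMsg T w)
    (hstep : StepwiseEff w P) : ∃ m, Concise T m (mApply w P) ∧ Vacuous (w ++ m) := by
  obtain ⟨m, hm, hmP⟩ := hM.exists_concise (mApply w P) P
  refine ⟨m, hm, hM.2.2 _ P (hw.append hm.1) ⟨stepwiseEff_append.mpr ⟨hstep, hm.2.2.1⟩, ?_⟩⟩
  rw [mApply_append, hmP]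

lemma not_isReverse_self (hM : IsMedium T) {τ : S → S} (hτ : τ ∈ T) : ¬ IsReverse τ τ := by
  intro hself
  obtain ⟨P, hP⟩ := hM.exists_apply_ne hτ
  obtain ⟨m, ⟨-, hcons, -⟩, hvac⟩ :=
    hM.exists_concise_vacuous_append (w := [τ]) (by simpa [IsMsg] using hτ) ⟨hP, trivial⟩
  obtain ⟨μ, hμ, hrev⟩ := Vacuous.exists_mem_isReverse_of_cons hvac
  obtain rfl : μ = τ := hrev.unique hself
  exact hcons μ hμ μ hμ hself

end IsMedium

/-- In a medium, no token is an injective function on the set of states. -/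
theorem stmt1 {T : Set (S → S)} (hM : IsMedium T) :
    ∀ τ ∈ T, ¬ Function.Injective τ := by
  rintro τ hτ hinj
  obtain ⟨P, hP⟩ := hM.exists_apply_ne hτ
  obtain ⟨m, ⟨-, -, -, hnodup⟩, hvac⟩ :=
    hM.exists_concise_vacuous_append (w := [τ, τ]) (by simpa [IsMsg] using hτ)
      ⟨hP, fun h => hP (hinj h), trivial⟩
  obtain ⟨i, j, hij, hi, hj⟩ :=
    Vacuous.exists_isReverse_get_of_cons_cons hvac (hM.not_isReverse_self hτ)
  exact hij (hnodup.get_inj_iff.mp (hi.unique hj))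
end

section
/- In a medium, for any two adjacent states P and Q (i.e., Pτ = Q for some token τ with P ≠ Q), there is exactly one token producing Q from P. -/
variable {S : Type*}

/-!
If `τ P = Q` and `m` is a concise message from `Q` back to `P`, then `τ :: m` is a return
message, hence vacuous by [Mb]. Since `m` is consistent, no two of its tokens can be paired,
so every token of `m` is paired with `τ`; the pairing being a bijection, `m` is a single
token `ρ`, a reverse of `τ`. Two tokens producing `Q` from `P` thus share the reverse `ρ`, and a
token is determined by any of its reverses.
-/

lemma IsReverse.left_unique {τ τ' ρ : S → S} (h : IsReverse τ ρ) (h' : IsReverse τ' ρ) :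
    τ = τ' := by
  funext A
  by_cases hτ : τ A = A
  · by_contra hne
    have hτ' : τ' A ≠ A := fun h'A => hne (hτ.trans h'A.symm)
    have hρ : ρ (τ' A) = A := (h' A (τ' A) (Ne.symm hτ')).mp rfl
    exact hne ((h A (τ' A) (Ne.symm hτ')).mpr hρ)
  · have hρ : ρ (τ A) = A := (h A (τ A) (Ne.symm hτ)).mp rfl
    exact ((h' A (τ A) (Ne.symm hτ)).mpr hρ).symm

lemma Vacuous.exists_eq_singleton_of_cons {τ : S → S} {m : List (S → S)}
    (hv : Vacuous (τ :: m)) (hm : Consistent m) : ∃ ρ, m = [ρ] ∧ IsReverse τ ρ := by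
  obtain ⟨σ, hfix, hinv, hrev⟩ := hv
  have hσ_succ : ∀ k : Fin m.length, σ k.succ = 0 := by
    intro k
    by_contra hk
    obtain ⟨l, hl⟩ := Fin.exists_succ_eq.mpr hk
    exact hm _ (m.get_mem k) _ (m.get_mem l) (by simpa [← hl] using hrev k.succ)
  obtain ⟨l, hl⟩ := Fin.exists_succ_eq.mpr (hfix 0)
  have hunique : ∀ k : Fin m.length, k = l := fun k =>
    Fin.succ_injective _ (σ.injective ((hσ_succ k).trans (by rw [hl, hinv])))
  have hlen : m.length = 1 := by
    have h := Fintype.card_le_one_iff.mpr fun a b => (hunique a).trans (hunique b).symm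
    rw [Fintype.card_fin] at h
    have := l.pos
    omega
  obtain ⟨ρ, rfl⟩ := List.length_eq_one_iff.mp hlen
  refine ⟨ρ, rfl, ?_⟩
  have hl0 : (l : ℕ) = 0 := Nat.lt_one_iff.mp l.isLt
  simpa [← hl, hl0] using hrev 0

lemma IsMedium.exists_eq_singleton_isReverse {T : Set (S → S)} (hM : IsMedium T)
    {τ : S → S} {P Q : S} {m : List (S → S)} (hτT : τ ∈ T) (hτ : τ P = Q) (hPQ : P ≠ Q)
    (hmT : IsMsg T m) (hm : Consistent m) (heff : StepwiseEff m Q) (hmQP : mApply m Q = P) :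
    ∃ ρ, m = [ρ] ∧ IsReverse τ ρ := by
  have hmsg : IsMsg T (τ :: m) := List.forall_mem_cons.mpr ⟨hτT, hmT⟩
  have hret : IsReturn (τ :: m) P :=
    ⟨⟨hτ ▸ hPQ.symm, hτ ▸ heff⟩, (hτ ▸ hmQP : mApply m (τ P) = P)⟩
  exact (hM.2.2 _ P hmsg hret).exists_eq_singleton_of_cons hm

/-- In a medium, for any two adjacent states there is exactly one token
producing one from the other. -/
theorem stmt2 {T : Set (S → S)} (hM : IsMedium T) (P Q : S) (hPQ : P ≠ Q)
    (hadj : ∃ τ ∈ T, τ P = Q) :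
    ∃! τ, τ ∈ T ∧ τ P = Q := by
  obtain ⟨m, ⟨hmT, hm, heff, -⟩, hmQP⟩ := hM.2.1 Q P hPQ.symm
  obtain ⟨τ₀, hτ₀T, hτ₀⟩ := hadj
  obtain ⟨ρ, rfl, hρ₀⟩ := hM.exists_eq_singleton_isReverse hτ₀T hτ₀ hPQ hmT hm heff hmQP
  refine ⟨τ₀, ⟨hτ₀T, hτ₀⟩, fun τ ⟨hτT, hτ⟩ => ?_⟩
  obtain ⟨ρ', hρρ', hρ⟩ := hM.exists_eq_singleton_isReverse hτT hτ hPQ hmT hm heff hmQP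
  cases hρρ'
  exact hρ.left_unique hρ₀
end

section
/- Let S, N, Q, W be four distinct states of a medium with Nτ = S, Wμ = Q, and concise messages q, q', w, w' satisfying Sq = Nq' = Q and Sw' = Nw = W, for tokens τ and μ. Then τ = μ if and only if C(q) = C(w) and ℓ(q) = ℓ(w). -/
variable {S : Type*}

/-!
Follow the four sides of the square: `τ q μ̃ w̃` is a return message for `N`, where `w̃` is the
reverse of `w`. By [Mb] it is vacuous, so every token occurs in it exactly as often as its
reverse. Since `q` and `w` are concise, comparing these counts token by token shows that
`τ = μ` forces `q` and `w` to be permutations of each other, and that `C(q) = C(w)` forces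
`μ̃ = τ̃`. The latter needs `τ̃ ≠ τ`, which holds in every medium.
-/

open List

variable {a b c a' : S → S}

lemma IsReverse.symm (h : IsReverse a a') : IsReverse a' a :=
  fun P Q hPQ => (h Q P hPQ.symm).symm

lemma IsReverse.left_unique_s8 (ha : IsReverse a c) (hb : IsReverse b c) : a = b := by
  funext P
  by_cases hbP : b P = P
  · rw [hbP]
    by_contra haP
    have hc : c (a P) = P := (ha P (a P) (Ne.symm haP)).mp rfl
    exact haP (((hb P (a P) (Ne.symm haP)).mpr hc).symm.trans hbP)
  · exact (ha P (b P) (Ne.symm hbP)).mpr ((hb P (b P) (Ne.symm hbP)).mp rfl)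

lemma IsReverse.right_unique (ha : IsReverse c a) (hb : IsReverse c b) : a = b :=
  ha.symm.left_unique_s8 hb.symm

lemma IsReverse.apply_apply (h : IsReverse a a') {P : S} (hP : a P ≠ P) : a' (a P) = P :=
  (h P (a P) (Ne.symm hP)).mp rfl

def IsWalk (m : List (S → S)) (P Q : S) : Prop := StepwiseEff m P ∧ mApply m P = Q

lemma isWalk_cons {m : List (S → S)} {P Q : S} :
    IsWalk (a :: m) P Q ↔ a P ≠ P ∧ IsWalk m (a P) Q :=
  and_assoc

lemma isWalk_singleton {P Q : S} (h : a P = Q) (hQP : Q ≠ P) : IsWalk [a] P Q :=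
  ⟨⟨h ▸ hQP, trivial⟩, h⟩

lemma IsWalk.append {u v : List (S → S)} {P Q R : S} (hu : IsWalk u P Q) (hv : IsWalk v Q R) :
    IsWalk (u ++ v) P R := by
  induction u generalizing P with
  | nil => obtain ⟨-, rfl⟩ := hu; exact hv
  | cons a u ih =>
    obtain ⟨ha, hu⟩ := isWalk_cons.mp hu
    exact isWalk_cons.mpr ⟨ha, ih hu⟩

lemma IsWalk.reverse_map {ρ : (S → S) → S → S} {m : List (S → S)} {P Q : S}
    (h : IsWalk m P Q) (hρ : ∀ x ∈ m, IsReverse x (ρ x)) : IsWalk (m.map ρ).reverse Q P := by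
  induction m generalizing P with
  | nil => obtain ⟨-, rfl⟩ := h; exact ⟨trivial, rfl⟩
  | cons a m ih =>
    obtain ⟨ha, hm⟩ := isWalk_cons.mp h
    rw [map_cons, reverse_cons]
    exact (ih hm fun x hx => hρ x (mem_cons_of_mem a hx)).append
      (isWalk_singleton ((hρ a mem_cons_self).apply_apply ha) (Ne.symm ha))

open Finset in
lemma Vacuous.count_eq [DecidableEq (S → S)] {m : List (S → S)} (hm : Vacuous m)
    (h : IsReverse a a') : m.count a = m.count a' := by
  obtain ⟨σ, -, hσσ, hσ⟩ := hm
  have count_eq_card (x : S → S) : m.count x = #{i | m.get i = x} :=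
    (Fin.card_filter_univ_eq_vector_get_eq_count x ⟨m, rfl⟩).symm
  rw [count_eq_card, count_eq_card]
  refine Finset.card_nbij' σ σ (fun i hi => ?_) (fun i hi => ?_)
    (fun i _ => hσσ i) (fun i _ => hσσ i)
  · simp only [Finset.coe_filter, Finset.mem_univ, true_and, Set.mem_ofPred_eq] at hi ⊢
    exact (hi ▸ hσ i).right_unique h
  · simp only [Finset.coe_filter, Finset.mem_univ, true_and, Set.mem_ofPred_eq] at hi ⊢
    exact (hi ▸ hσ i).right_unique h.symm

lemma Consistent.count_eq_zero_or [DecidableEq (S → S)] {m : List (S → S)} (hm : Consistent m)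
    (h : IsReverse a a') : m.count a = 0 ∨ m.count a' = 0 := by
  by_contra! hpos
  exact hm a (count_pos_iff.mp (Nat.pos_of_ne_zero hpos.1)) a'
    (count_pos_iff.mp (Nat.pos_of_ne_zero hpos.2)) h

lemma IsMedium.exists_reverse {T : Set (S → S)} (hM : IsMedium T) {τ : S → S} (hτ : τ ∈ T) :
    ∃ τ' ∈ T, τ' ≠ τ ∧ IsReverse τ τ' := by
  obtain ⟨⟨-, -, hid⟩, hMa, hMb⟩ := hM
  obtain ⟨P, hP⟩ : ∃ P, τ P ≠ P := by
    by_contra! h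
    exact hid τ hτ (funext h)
  obtain ⟨m, ⟨hmT, hmc, hm, -⟩, hmP⟩ := hMa (τ P) P hP
  have hmsg : IsMsg T (τ :: m) := forall_mem_cons.mpr ⟨hτ, hmT⟩
  obtain ⟨σ, hσ, -, hrev⟩ := hMb (τ :: m) P hmsg ⟨⟨hP, hm⟩, hmP⟩
  -- `σ 0 ≠ 0`, so the partner of the leading `τ` lies in `m`, which rules out `τ` itself
  obtain ⟨k, hk⟩ := Fin.exists_succ_eq.mpr (hσ 0)
  have hτk : IsReverse τ (m.get k) := by simpa [← hk] using hrev 0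
  refine ⟨m.get k, hmT _ (get_mem m k), fun hkτ => ?_, hτk⟩
  have hτm : τ ∈ m := hkτ ▸ get_mem m k
  exact hmc τ hτm τ hτm (hkτ ▸ hτk)

def IsReversal (T : Set (S → S)) (ρ : (S → S) → S → S) : Prop :=
  ∀ x ∈ T, ρ x ∈ T ∧ ρ x ≠ x ∧ IsReverse x (ρ x)

lemma IsMedium.exists_isReversal {T : Set (S → S)} (hM : IsMedium T) : ∃ ρ, IsReversal T ρ := by
  choose! ρ hρT hρ using fun τ (hτ : τ ∈ T) => hM.exists_reverse hτ
  exact ⟨ρ, fun x hx => ⟨hρT x hx, hρ x hx⟩⟩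

namespace IsReversal

variable {T : Set (S → S)} {ρ : (S → S) → S → S} (hρ : IsReversal T ρ) {τ x y : S → S}
include hρ

lemma apply_apply (hx : x ∈ T) : ρ (ρ x) = x :=
  (hρ (ρ x) (hρ x hx).1).2.2.right_unique (hρ x hx).2.2.symm

lemma eq_iff (hx : x ∈ T) (hy : y ∈ T) : ρ x = y ↔ x = ρ y :=
  ⟨fun h => h ▸ (hρ.apply_apply hx).symm, fun h => h ▸ hρ.apply_apply hy⟩

lemma count_reverse_map [DecidableEq (S → S)] {w : List (S → S)} (hw : IsMsg T w) (hx : x ∈ T) :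
    ((w.map ρ).reverse).count x = w.count (ρ x) := by
  rw [count_reverse, count_eq_countP, countP_map, count_eq_countP]
  refine countP_congr fun y hy => ?_
  simpa only [Function.comp_apply, beq_iff_eq] using hρ.eq_iff (hw y hy) hx

lemma count_pair [DecidableEq (S → S)] (hτ : τ ∈ T) (hx : x ∈ T) :
    [τ, ρ τ].count x = [τ, ρ τ].count (ρ x) := by
  simp only [count_cons, count_nil, beq_iff_eq, hρ.eq_iff hτ hx,
    hρ.eq_iff hτ (hρ x hx).1, hρ.apply_apply hx]
  omega

variable [DecidableEq (S → S)]

lemma count_balance {μ' : S → S} {q w : List (S → S)} (hw : IsMsg T w)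
    (hvac : Vacuous ([τ] ++ q ++ [μ'] ++ (w.map ρ).reverse)) (hx : x ∈ T) :
    q.count x + w.count (ρ x) + [τ, μ'].count x =
      q.count (ρ x) + w.count x + [τ, μ'].count (ρ x) := by
  have h := hvac.count_eq (hρ x hx).2.2
  simp only [count_append, hρ.count_reverse_map hw hx, hρ.count_reverse_map hw (hρ x hx).1,
    hρ.apply_apply hx, count_cons, count_nil] at h ⊢
  omega

lemma perm_of_count_balance {q w : List (S → S)} (hqT : IsMsg T q) (hqc : Consistent q)
    (hqn : q.Nodup) (hwT : IsMsg T w) (hwc : Consistent w) (hwn : w.Nodup)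
    (h : ∀ x ∈ T, q.count x + w.count (ρ x) = q.count (ρ x) + w.count x) : q.Perm w := by
  refine perm_iff_count.mpr fun x => ?_
  by_cases hx : x ∈ T
  · have := h x hx
    have := hqc.count_eq_zero_or (hρ x hx).2.2
    have := hwc.count_eq_zero_or (hρ x hx).2.2
    have := nodup_iff_count_le_one.mp hqn x
    have := nodup_iff_count_le_one.mp hwn x
    omega
  · rw [count_eq_zero_of_not_mem fun h => hx (hqT x h),
      count_eq_zero_of_not_mem fun h => hx (hwT x h)]

lemma eq_of_count_pair {μ : S → S} (hτ : τ ∈ T) (hμ : μ ∈ T)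
    (h : [τ, ρ μ].count τ = [τ, ρ μ].count (ρ τ)) : τ = μ := by
  have hmem : ρ τ ∈ [τ, ρ μ] := count_pos_iff.mp (h ▸ count_pos_iff.mpr mem_cons_self)
  rcases mem_pair.mp hmem with hself | hρμ
  · exact absurd hself (hρ τ hτ).2.1
  · exact ((hρ.eq_iff hτ (hρ μ hμ).1).mp hρμ).trans (hρ.apply_apply hμ)

end IsReversal

theorem stmt8_general {S' : Type*} {T : Set (S' → S')} (hM : IsMedium T)
    (St N Q W : S') (τ μ : S' → S') (hτ : τ ∈ T) (hμ : μ ∈ T)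
    (hd1 : St ≠ N)
    (hd6 : Q ≠ W)
    (hNS : τ N = St) (hWQ : μ W = Q)
    (q w : List (S' → S'))
    (hq : Concise T q St)
    (hw : Concise T w N)
    (hqQ : mApply q St = Q)
    (hwW : mApply w N = W) :
    τ = μ ↔ (msgContent q = msgContent w ∧ q.length = w.length) := by
  classical
  obtain ⟨ρ, hρ⟩ := hM.exists_isReversal
  have hwρ : ∀ x ∈ w, IsReverse x (ρ x) := fun x hx => (hρ x (hw.1 x hx)).2.2
  have hcycle : IsWalk ([τ] ++ q ++ [ρ μ] ++ (w.map ρ).reverse) N N :=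
    (((isWalk_singleton hNS hd1).append ⟨hq.2.2.1, hqQ⟩).append
      (isWalk_singleton (hWQ ▸ (hρ μ hμ).2.2.apply_apply (hWQ ▸ hd6)) hd6.symm)).append
      (IsWalk.reverse_map ⟨hw.2.2.1, hwW⟩ hwρ)
  have hmsg : IsMsg T ([τ] ++ q ++ [ρ μ] ++ (w.map ρ).reverse) := by
    simp only [IsMsg, mem_append, mem_singleton, mem_reverse, mem_map]
    rintro x ((((rfl | hx) | rfl) | ⟨y, hy, rfl⟩))
    exacts [hτ, hq.1 x hx, (hρ μ hμ).1, (hρ y (hw.1 y hy)).1]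
  have hvac := hM.2.2 _ N hmsg hcycle
  have hbal := fun x (hx : x ∈ T) => hρ.count_balance hw.1 hvac hx
  constructor
  · rintro rfl
    have hperm := hρ.perm_of_count_balance hq.1 hq.2.1 hq.2.2.2 hw.1 hw.2.1 hw.2.2.2
      fun x hx => by have := hbal x hx; rw [hρ.count_pair hτ hx] at this; omega
    exact ⟨Set.ext fun x => hperm.mem_iff, hperm.length_eq⟩
  · rintro ⟨hC, -⟩
    have hperm := (perm_ext_iff_of_nodup hq.2.2.2 hw.2.2.2).mpr (Set.ext_iff.mp hC)
    have := hbal τ hτ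
    rw [hperm.count_eq, hperm.count_eq] at this
    exact hρ.eq_of_count_pair hτ hμ (by omega)

/-- Theorem 5, (ii) ⇔ (iii): `τ = μ` iff `C(q) = C(w)` and `ℓ(q) = ℓ(w)`. -/
theorem stmt8 {S' : Type*} {T : Set (S' → S')} (hM : IsMedium T)
    (St N Q W : S') (τ μ : S' → S') (hτ : τ ∈ T) (hμ : μ ∈ T)
    (hd1 : St ≠ N) (hd2 : St ≠ Q) (hd3 : St ≠ W) (hd4 : N ≠ Q) (hd5 : N ≠ W)
    (hd6 : Q ≠ W)
    (hNS : τ N = St) (hWQ : μ W = Q)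
    (q q' w w' : List (S' → S'))
    (hq : Concise T q St) (hq' : Concise T q' N)
    (hw : Concise T w N) (hw' : Concise T w' St)
    (hqQ : mApply q St = Q) (hq'Q : mApply q' N = Q)
    (hwW : mApply w N = W) (hw'W : mApply w' St = W) :
    τ = μ ↔ (msgContent q = msgContent w ∧ q.length = w.length) :=
  stmt8_general hM St N Q W τ μ hτ hμ hd1 hd6 hNS hWQ q w hq hw hqQ hwW
end
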